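/- arXiv:math/0405536 — 4 statements merged into one kernel-verified Lean document; each statement's English description precedes it below -/
import Mathlib

section
/- A countable group G is left orderable if and only if G embeds into the group of orientation-preserving homeomorphisms of the real line. -/
/-!
A countable left-ordered group `G` acts faithfully on itself by the order-preserving left
translations, hence on the countable, dense, unbounded order `G ×ₗ ℚ` through the first factor.
By Cantor's back-and-forth theorem `G ×ₗ ℚ ≃o ℚ`. An order automorphism `φ` of `ℚ` extends to `ℝ`
by `x ↦ sup {φ q | q < x}`; this extension is characterised by `r < φ̃ x ↔ φ⁻¹ r < x` for rational
`r`, which makes `φ ↦ φ̃` an injective homomorphism.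

Conversely, if `G` acts faithfully by order automorphisms on a linear order `X`, well-order `X`
and order `G` lexicographically by the maps `g : X → X`; an order automorphism of `X` applied
pointwise preserves the lexicographic order, which gives left invariance.
-/

theorem exists_leftInvariant_strictTotalOrder_iff (G : Type*) [Mul G] :
    (∃ lt : G → G → Prop,
      (∀ a, ¬ lt a a) ∧
      (∀ a b c, lt a b → lt b c → lt a c) ∧
      (∀ a b, a ≠ b → lt a b ∨ lt b a) ∧
      (∀ a b c, lt b c → lt (a * b) (a * c))) ↔
    ∃ _ : LinearOrder G, MulLeftStrictMono G := by
  constructor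
  · rintro ⟨lt, irrefl, trans, total, mul_left⟩
    classical
    have : IsStrictTotalOrder G lt :=
      { irrefl, trans,
        trichotomous a b hab hba := by_contra fun h => (total a b h).elim hab hba }
    exact ⟨linearOrderOfSTO lt, ⟨fun a _ _ h => mul_left a _ _ h⟩⟩
  · rintro ⟨_, _⟩
    exact ⟨(· < ·), lt_irrefl, fun _ _ _ => lt_trans, fun _ _ => Ne.lt_or_gt,
      fun a _ _ h => mul_lt_mul_right h a⟩

namespace OrderIso

variable {α β : Type*} [Preorder α] [Preorder β]

def autCongr (e : α ≃o β) : (α ≃o α) ≃* (β ≃o β) where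
  toFun φ := e.symm.trans (φ.trans e)
  invFun ψ := e.trans (ψ.trans e.symm)
  left_inv φ := by ext; simp
  right_inv ψ := by ext; simp
  map_mul' φ ψ := by ext; simp [RelIso.mul_apply]

def prodLexCongrLeftHom : (α ≃o α) →* (α ×ₗ β ≃o α ×ₗ β) :=
  MonoidHom.mk' (fun φ => Prod.Lex.prodLexCongr φ (refl β)) fun φ ψ => by
    ext x; rfl

theorem prodLexCongrLeftHom_injective [Nonempty β] :
    Function.Injective (prodLexCongrLeftHom : (α ≃o α) →* (α ×ₗ β ≃o α ×ₗ β)) := by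
  intro φ ψ h
  ext a
  obtain ⟨b⟩ := ‹Nonempty β›
  simpa [prodLexCongrLeftHom] using congrArg (fun e => (ofLex (e (toLex (a, b)))).1) h

section MulLeft

variable (G : Type*) [Group G] [Preorder G] [MulLeftMono G]

def mulLeftHom : G →* (G ≃o G) :=
  MonoidHom.mk' mulLeft fun g h => by ext x; simp [RelIso.mul_apply, mul_assoc]

theorem mulLeftHom_injective : Function.Injective (mulLeftHom G) := fun g h hgh => by
  simpa [mulLeftHom] using congrArg (· 1) hgh

end MulLeft

noncomputable def ratExtend (φ : ℚ ≃o ℚ) (x : ℝ) : ℝ :=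
  sSup ((fun q : ℚ => (φ q : ℝ)) '' {q : ℚ | (q : ℝ) < x})

theorem rat_lt_ratExtend_iff (φ : ℚ ≃o ℚ) (x : ℝ) (r : ℚ) :
    (r : ℝ) < ratExtend φ x ↔ (φ.symm r : ℝ) < x := by
  set S := (fun q : ℚ => (φ q : ℝ)) '' {q : ℚ | (q : ℝ) < x}
  constructor
  · intro h
    have hne : S.Nonempty := let ⟨q, hq⟩ := exists_rat_lt x; ⟨_, q, hq, rfl⟩
    obtain ⟨_, ⟨q, hq, rfl⟩, hrq⟩ := exists_lt_of_lt_csSup hne h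
    have : φ.symm r < q := by rw [symm_apply_lt]; exact Rat.cast_lt.1 hrq
    exact (Rat.cast_lt.2 this).trans hq
  · intro h
    have hbdd : BddAbove S := by
      obtain ⟨s, hs⟩ := exists_rat_gt x
      refine ⟨φ s, ?_⟩
      rintro _ ⟨q, hq, rfl⟩
      exact Rat.cast_le.2 (φ.monotone (Rat.cast_lt.1 (hq.trans hs)).le)
    obtain ⟨q, hrq, hqx⟩ := exists_rat_btwn h
    have : r < φ q := by rw [← symm_apply_lt]; exact_mod_cast hrq
    exact (Rat.cast_lt.2 this).trans_le (le_csSup hbdd ⟨q, hqx, rfl⟩)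

theorem ratExtend_ratExtend (φ ψ : ℚ ≃o ℚ) (x : ℝ) :
    ratExtend φ (ratExtend ψ x) = ratExtend (φ * ψ) x :=
  eq_of_forall_rat_lt_iff_lt fun r => by
    simp only [rat_lt_ratExtend_iff]
    rfl

theorem ratExtend_one (x : ℝ) : ratExtend 1 x = x :=
  eq_of_forall_rat_lt_iff_lt fun r => rat_lt_ratExtend_iff 1 x r

theorem ratExtend_ratCast (φ : ℚ ≃o ℚ) (q : ℚ) : ratExtend φ q = φ q :=
  eq_of_forall_rat_lt_iff_lt fun r => by
    rw [rat_lt_ratExtend_iff, Rat.cast_lt, Rat.cast_lt, symm_apply_lt]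

theorem monotone_ratExtend (φ : ℚ ≃o ℚ) : Monotone (ratExtend φ) := fun x y hxy =>
  le_of_forall_rat_lt_imp_le fun r hr =>
    ((rat_lt_ratExtend_iff φ y r).2 (((rat_lt_ratExtend_iff φ x r).1 hr).trans_le hxy)).le

noncomputable def ratExtendHom : (ℚ ≃o ℚ) →* (ℝ ≃o ℝ) :=
  MonoidHom.mk' (fun φ => Equiv.toOrderIso
      { toFun := ratExtend φ
        invFun := ratExtend φ⁻¹
        left_inv := fun x => by rw [ratExtend_ratExtend, inv_mul_cancel, ratExtend_one]
        right_inv := fun x => by rw [ratExtend_ratExtend, mul_inv_cancel, ratExtend_one] }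
      (monotone_ratExtend φ) (monotone_ratExtend φ⁻¹))
    fun φ ψ => OrderIso.ext <| funext fun x => (ratExtend_ratExtend φ ψ x).symm

theorem ratExtendHom_injective : Function.Injective ratExtendHom := fun φ ψ h =>
  OrderIso.ext <| funext fun q => by
    have := congrArg (· (q : ℝ)) h
    simpa [ratExtendHom, ratExtend_ratCast] using this

end OrderIso

theorem exists_injective_monoidHom_ratOrderIso (G : Type*) [Group G] [LinearOrder G]
    [MulLeftMono G] [Countable G] : ∃ f : G →* (ℚ ≃o ℚ), Function.Injective f := by
  have : Countable (G ×ₗ ℚ) := inferInstanceAs (Countable (G × ℚ))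
  obtain ⟨e⟩ := Order.iso_of_countable_dense (G ×ₗ ℚ) ℚ
  exact ⟨(OrderIso.autCongr e).toMonoidHom.comp (OrderIso.prodLexCongrLeftHom.comp
    (OrderIso.mulLeftHom G)), (OrderIso.autCongr e).injective.comp
    (OrderIso.prodLexCongrLeftHom_injective.comp (OrderIso.mulLeftHom_injective G))⟩

theorem Pi.toLex_comp_lt_toLex_comp {ι α β : Type*} [LinearOrder ι] [Preorder α] [Preorder β]
    {φ : α → β} (hφ : StrictMono φ) {u v : ι → α} (h : toLex u < toLex v) :
    toLex (φ ∘ u) < toLex (φ ∘ v) :=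
  let ⟨i, hlt, hi⟩ := h
  ⟨i, fun j hj => congrArg φ (hlt j hj), hφ hi⟩

section

variable {G : Type*} [Group G]

theorem MonoidHom.exists_linearOrder_mulLeftStrictMono_of_separating {ι X : Type*}
    [LinearOrder ι] [WellFoundedLT ι] [LinearOrder X] (f : G →* (X ≃o X)) (x : ι → X)
    (hx : Function.Injective fun g => (f g : X → X) ∘ x) :
    ∃ _ : LinearOrder G, MulLeftStrictMono G :=
  let _ : LinearOrder G := LinearOrder.lift' (fun g => toLex ((f g : X → X) ∘ x)) hx
  ⟨inferInstance, ⟨fun a b c h => by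
    show toLex ((f (a * b) : X → X) ∘ x) < toLex ((f (a * c) : X → X) ∘ x)
    simpa only [map_mul, RelIso.coe_mul, Function.comp_assoc] using
      Pi.toLex_comp_lt_toLex_comp (f a).strictMono h⟩⟩

theorem MonoidHom.exists_linearOrder_mulLeftStrictMono_of_injective {X : Type*} [LinearOrder X]
    (f : G →* (X ≃o X)) (hf : Function.Injective f) : ∃ _ : LinearOrder G, MulLeftStrictMono G := by
  -- `WellOrderExtension X` serves only as an unordered copy of `X`, to be well-ordered.
  obtain ⟨_, _⟩ := exists_wellFoundedLT (WellOrderExtension X)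
  refine f.exists_linearOrder_mulLeftStrictMono_of_separating toWellOrderExtension.symm
    fun g h hgh => hf (DFunLike.coe_injective ?_)
  simpa [Function.comp_assoc] using congrArg (· ∘ toWellOrderExtension) hgh

end

/-- A countable group `G` is left orderable iff it embeds into the group of
orientation-preserving homeomorphisms of the real line (modeled as order
isomorphisms `ℝ ≃o ℝ`, which are exactly the orientation-preserving
homeomorphisms of `ℝ`). -/
theorem stmt_1 (G : Type*) [Group G] [Countable G] :
    (∃ lt : G → G → Prop,
      (∀ a, ¬ lt a a) ∧
      (∀ a b c, lt a b → lt b c → lt a c) ∧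
      (∀ a b, a ≠ b → lt a b ∨ lt b a) ∧
      (∀ a b c, lt b c → lt (a * b) (a * c))) ↔
    (∃ f : G →* (ℝ ≃o ℝ), Function.Injective f) := by
  rw [exists_leftInvariant_strictTotalOrder_iff]
  constructor
  · rintro ⟨_, _⟩
    have := mulLeftMono_of_mulLeftStrictMono G
    obtain ⟨f, hf⟩ := exists_injective_monoidHom_ratOrderIso G
    exact ⟨OrderIso.ratExtendHom.comp f, OrderIso.ratExtendHom_injective.comp hf⟩
  · rintro ⟨f, hf⟩
    exact f.exists_linearOrder_mulLeftStrictMono_of_injective hf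
end

section
/- Any two left-invariant total orders on the additive group ℤ[1/r] (for a natural number r > 1) agree up to sign: if ≺₁ and ≺₂ are left-invariant total orders on ℤ[1/r], then either (x ≺₁ y ↔ x ≺₂ y for all x, y) or (x ≺₁ y ↔ y ≺₂ x for all x, y). -/
/-!
Any two positive rationals are commensurable: `m • p = n • q` for some positive naturals `m, n`.
In a left-invariant order the sign of `n • a` is the sign of `a` for `n ≠ 0`, so all elements of a
subgroup of `ℚ` that are positive as rationals have the same sign for the order. Hence the
positive cone of the order consists either of the positive or of the negative rationals in the
subgroup, and a left-invariant order is determined by its positive cone.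
-/

/-- `ℤ[1/r]`, the subring of `ℚ` generated by `ℤ` and `1/r`. -/
def Zinv (r : ℕ) : Subring ℚ := Subring.closure {((r : ℚ))⁻¹}

theorem Rat.exists_nsmul_eq_nsmul_of_pos {p q : ℚ} (hp : 0 < p) (hq : 0 < q) :
    ∃ m n : ℕ, m ≠ 0 ∧ n ≠ 0 ∧ m • p = n • q := by
  refine ⟨p.den * q.num.natAbs, p.num.natAbs * q.den, by positivity, by positivity, ?_⟩
  have hpnum : (p.num.natAbs : ℚ) = p.num := by
    rw [Nat.cast_natAbs, abs_of_pos (Rat.num_pos.mpr hp)]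
  have hqnum : (q.num.natAbs : ℚ) = q.num := by
    rw [Nat.cast_natAbs, abs_of_pos (Rat.num_pos.mpr hq)]
  simp only [nsmul_eq_mul, Nat.cast_mul, hpnum, hqnum]
  rw [← Rat.mul_den_eq_num p, ← Rat.mul_den_eq_num q]
  ring

structure IsLeftInvariantStrictTotalOrder {G : Type*} [Add G] (lt : G → G → Prop) : Prop where
  irrefl : ∀ a, ¬ lt a a
  trans : ∀ a b c, lt a b → lt b c → lt a c
  total : ∀ a b, a ≠ b → lt a b ∨ lt b a
  add_left : ∀ x y z, lt y z → lt (x + y) (x + z)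

namespace IsLeftInvariantStrictTotalOrder

variable {G : Type*} {lt : G → G → Prop}

theorem swap [Add G] (h : IsLeftInvariantStrictTotalOrder lt) :
    IsLeftInvariantStrictTotalOrder (fun x y => lt y x) where
  irrefl := h.irrefl
  trans a b c hab hbc := h.trans c b a hbc hab
  total a b hab := (h.total a b hab).symm
  add_left x y z := h.add_left x z y

section AddMonoid

variable [AddMonoid G] (h : IsLeftInvariantStrictTotalOrder lt)
include h

theorem zero_lt_nsmul {a : G} (ha : lt 0 a) {n : ℕ} (hn : n ≠ 0) : lt 0 (n • a) := by
  induction n, Nat.one_le_iff_ne_zero.mpr hn using Nat.le_induction with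
  | base => simpa using ha
  | succ n hn1 ih =>
    rw [succ_nsmul]
    exact h.trans _ _ _ (ih (by omega)) (by simpa using h.add_left (n • a) 0 a ha)

theorem zero_lt_of_nsmul_eq_nsmul {a b : G} {m n : ℕ} (hm : m ≠ 0) (hn : n ≠ 0)
    (hb : b ≠ 0) (hmn : m • a = n • b) (ha : lt 0 a) : lt 0 b := by
  refine (h.total 0 b hb.symm).resolve_right fun hb' => h.irrefl 0 (h.trans _ (n • b) _ ?_ ?_)
  · exact hmn ▸ h.zero_lt_nsmul ha hm
  · exact h.swap.zero_lt_nsmul hb' hn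

end AddMonoid

section AddGroup

variable [AddGroup G] (h : IsLeftInvariantStrictTotalOrder lt)
include h

theorem lt_iff_zero_lt_neg_add {x y : G} : lt x y ↔ lt 0 (-x + y) := by
  refine ⟨fun hxy => ?_, fun hxy => ?_⟩
  · simpa using h.add_left (-x) x y hxy
  · simpa using h.add_left x 0 (-x + y) hxy

theorem zero_lt_neg_iff {a : G} : lt 0 (-a) ↔ lt a 0 := by
  simpa using (h.lt_iff_zero_lt_neg_add (x := a) (y := 0)).symm

variable {f : G →+ ℚ} (hf : Function.Injective f)
include hf

theorem zero_lt_iff_of_forall_pos (hpos : ∀ c, 0 < f c → lt 0 c) (c : G) :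
    lt 0 c ↔ 0 < f c := by
  refine ⟨fun hc => ?_, hpos c⟩
  rcases lt_trichotomy (f c) 0 with hneg | hzero | hpos'
  · have hc' : lt c 0 := h.zero_lt_neg_iff.mp (hpos (-c) (by simpa using hneg))
    exact absurd (h.trans _ _ _ hc hc') (h.irrefl 0)
  · rw [hf (hzero.trans f.map_zero.symm)] at hc
    exact absurd hc (h.irrefl 0)
  · exact hpos'

theorem zero_lt_iff_or :
    (∀ c, lt 0 c ↔ 0 < f c) ∨ (∀ c, lt 0 c ↔ f c < 0) := by
  by_cases hpos : ∀ c, 0 < f c → lt 0 c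
  · exact Or.inl (h.zero_lt_iff_of_forall_pos hf hpos)
  right
  obtain ⟨a, ha, hna⟩ := not_forall₂.mp hpos
  have hneg : ∀ c, 0 < f c → lt c 0 := by
    intro c hc
    have hc0 : c ≠ 0 := fun hc0 => by simp [hc0] at hc
    have ha0 : a ≠ 0 := fun ha0 => by simp [ha0] at ha
    obtain ⟨m, n, hm, hn, hmn⟩ := Rat.exists_nsmul_eq_nsmul_of_pos hc ha
    refine (h.total c 0 hc0).resolve_right fun hc' => hna ?_
    exact h.zero_lt_of_nsmul_eq_nsmul hm hn ha0 (hf (by simpa using hmn)) hc'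
  intro c
  simpa using
    (h.zero_lt_neg_iff (a := -c)).trans (h.swap.zero_lt_iff_of_forall_pos hf hneg (-c))

theorem lt_iff_or :
    (∀ x y, lt x y ↔ f x < f y) ∨ (∀ x y, lt x y ↔ f y < f x) := by
  refine (h.zero_lt_iff_or hf).imp (fun hcone x y => ?_) (fun hcone x y => ?_)
  · rw [h.lt_iff_zero_lt_neg_add, hcone, map_add, map_neg, neg_add_eq_sub, sub_pos]
  · rw [h.lt_iff_zero_lt_neg_add, hcone, map_add, map_neg, neg_add_eq_sub, sub_neg]

end AddGroup

end IsLeftInvariantStrictTotalOrder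

theorem stmt_2_general (r : ℕ) (lt₁ lt₂ : Zinv r → Zinv r → Prop)
    (h₁_irrefl : ∀ a, ¬ lt₁ a a)
    (h₁_trans : ∀ a b c, lt₁ a b → lt₁ b c → lt₁ a c)
    (h₁_total : ∀ a b, a ≠ b → lt₁ a b ∨ lt₁ b a)
    (h₁_inv : ∀ x y z, lt₁ y z → lt₁ (x + y) (x + z))
    (h₂_irrefl : ∀ a, ¬ lt₂ a a)
    (h₂_trans : ∀ a b c, lt₂ a b → lt₂ b c → lt₂ a c)
    (h₂_total : ∀ a b, a ≠ b → lt₂ a b ∨ lt₂ b a)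
    (h₂_inv : ∀ x y z, lt₂ y z → lt₂ (x + y) (x + z)) :
    (∀ x y, lt₁ x y ↔ lt₂ x y) ∨ (∀ x y, lt₁ x y ↔ lt₂ y x) := by
  have ord₁ : IsLeftInvariantStrictTotalOrder lt₁ :=
    ⟨h₁_irrefl, h₁_trans, h₁_total, h₁_inv⟩
  have ord₂ : IsLeftInvariantStrictTotalOrder lt₂ :=
    ⟨h₂_irrefl, h₂_trans, h₂_total, h₂_inv⟩
  have hf : Function.Injective (Zinv r).subtype.toAddMonoidHom := (Zinv r).subtype_injective
  rcases ord₁.lt_iff_or hf with h₁ | h₁ <;> rcases ord₂.lt_iff_or hf with h₂ | h₂ <;>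
    simp [h₁, h₂]

/-- Any two left-invariant (translation-invariant) total orders on the additive
group `ℤ[1/r]` (for `r > 1`) agree up to sign. -/
theorem stmt_2 (r : ℕ) (hr : 1 < r) (lt₁ lt₂ : Zinv r → Zinv r → Prop)
    (h₁_irrefl : ∀ a, ¬ lt₁ a a)
    (h₁_trans : ∀ a b c, lt₁ a b → lt₁ b c → lt₁ a c)
    (h₁_total : ∀ a b, a ≠ b → lt₁ a b ∨ lt₁ b a)
    (h₁_inv : ∀ x y z, lt₁ y z → lt₁ (x + y) (x + z))
    (h₂_irrefl : ∀ a, ¬ lt₂ a a)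
    (h₂_trans : ∀ a b c, lt₂ a b → lt₂ b c → lt₂ a c)
    (h₂_total : ∀ a b, a ≠ b → lt₂ a b ∨ lt₂ b a)
    (h₂_inv : ∀ x y z, lt₂ y z → lt₂ (x + y) (x + z)) :
    (∀ x y, lt₁ x y ↔ lt₂ x y) ∨ (∀ x y, lt₁ x y ↔ lt₂ y x) :=
  stmt_2_general r lt₁ lt₂ h₁_irrefl h₁_trans h₁_total h₁_inv h₂_irrefl h₂_trans h₂_total h₂_inv
end

section
/- Any left-invariant total order on a subgroup A of the additive group of ℚ is determined up to sign: either the order agrees with the standard order on A, or with its reverse. -/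
/-!
Translation invariance makes the order determined by its positive cone `{z | 0 ≺ z}`, which is
closed under addition and contains exactly one of `z`, `-z` for each `z ≠ 0`. Two positive
rationals `a`, `b` are commensurable, `m • a = n • b` with `m, n > 0`, so they lie on the same
side of `0` for `≺`. Hence the cone is either the standard positive half of `A` or its negative.
-/

structure IsTranslationInvariantOrder (G : Type*) [AddCommGroup G] (lt : G → G → Prop) : Prop where
  irrefl : ∀ a, ¬ lt a a
  trans : ∀ a b c, lt a b → lt b c → lt a c
  total : ∀ a b, a ≠ b → lt a b ∨ lt b a
  add_left : ∀ x y z, lt y z → lt (x + y) (x + z)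

namespace IsTranslationInvariantOrder

variable {G : Type*} [AddCommGroup G] {lt : G → G → Prop}

theorem dual (h : IsTranslationInvariantOrder G lt) :
    IsTranslationInvariantOrder G (fun a b => lt b a) where
  irrefl := h.irrefl
  trans a b c hab hbc := h.trans c b a hbc hab
  total a b hab := (h.total a b hab).symm
  add_left x y z := h.add_left x z y

theorem asymm (h : IsTranslationInvariantOrder G lt) {a b : G} (hab : lt a b) : ¬ lt b a :=
  fun hba => h.irrefl a (h.trans a b a hab hba)

theorem lt_iff_zero_lt_sub (h : IsTranslationInvariantOrder G lt) (x y : G) :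
    lt x y ↔ lt 0 (y - x) := by
  constructor
  · intro hxy
    simpa [neg_add_eq_sub] using h.add_left (-x) x y hxy
  · intro hyx
    simpa using h.add_left x 0 (y - x) hyx

theorem zero_lt_neg_iff (h : IsTranslationInvariantOrder G lt) (z : G) :
    lt 0 (-z) ↔ lt z 0 := by
  rw [h.lt_iff_zero_lt_sub z 0, zero_sub]

theorem zero_lt_nsmul (h : IsTranslationInvariantOrder G lt) {z : G} (hz : lt 0 z) :
    ∀ {n : ℕ}, n ≠ 0 → lt 0 (n • z)
  | 0, hn => absurd rfl hn
  | 1, _ => by simpa using hz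
  | n + 2, _ => by
    have hz' : lt ((n + 1) • z) ((n + 1) • z + z) := by
      simpa using h.add_left ((n + 1) • z) 0 z hz
    rw [succ_nsmul]
    exact h.trans _ _ _ (h.zero_lt_nsmul hz n.succ_ne_zero) hz'

theorem zero_lt_of_nsmul_eq_nsmul (h : IsTranslationInvariantOrder G lt) {a b : G} {m n : ℕ}
    (hm : m ≠ 0) (hn : n ≠ 0) (hab : m • a = n • b) (ha : lt 0 a) : lt 0 b := by
  have hma : lt 0 (n • b) := hab ▸ h.zero_lt_nsmul ha hm
  by_contra hb
  rcases eq_or_ne b 0 with rfl | hb0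
  · exact h.irrefl 0 (by simpa using hma)
  have hnegb : lt 0 (-b) := (h.zero_lt_neg_iff b).2 ((h.total 0 b hb0.symm).resolve_left hb)
  have : lt 0 (-(n • b)) := by simpa using h.zero_lt_nsmul hnegb hn
  exact h.asymm hma ((h.zero_lt_neg_iff _).1 this)

end IsTranslationInvariantOrder

theorem Rat.exists_nsmul_eq_nsmul_of_pos_s3 {a b : ℚ} (ha : 0 < a) (hb : 0 < b) :
    ∃ m n : ℕ, m ≠ 0 ∧ n ≠ 0 ∧ m • a = n • b := by
  have hq : 0 < (a / b).num := Rat.num_pos.2 (div_pos ha hb)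
  refine ⟨(a / b).den, (a / b).num.natAbs, (a / b).den_ne_zero, by omega, ?_⟩
  rw [nsmul_eq_mul, nsmul_eq_mul, Nat.cast_natAbs, abs_of_pos hq, ← Rat.mul_den_eq_num]
  field_simp

namespace IsTranslationInvariantOrder

variable {A : AddSubgroup ℚ} {lt : A → A → Prop}

theorem zero_lt_iff_of_zero_lt (h : IsTranslationInvariantOrder A lt) {a : A}
    (ha : 0 < (a : ℚ)) (hla : lt 0 a) (z : A) : lt 0 z ↔ 0 < (z : ℚ) := by
  have of_pos : ∀ b : A, 0 < (b : ℚ) → lt 0 b := fun b hb => by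
    obtain ⟨m, n, hm, hn, hmn⟩ := Rat.exists_nsmul_eq_nsmul_of_pos_s3 ha hb
    exact h.zero_lt_of_nsmul_eq_nsmul hm hn (Subtype.ext (by simpa using hmn)) hla
  rcases lt_trichotomy (z : ℚ) 0 with hz | hz | hz
  · have hnegz : lt 0 (-z) := of_pos (-z) (by simpa using hz)
    exact iff_of_false (h.asymm ((h.zero_lt_neg_iff z).1 hnegz)) hz.not_gt
  · obtain rfl : z = 0 := Subtype.ext hz
    exact iff_of_false (h.irrefl 0) (lt_irrefl 0)
  · exact iff_of_true (of_pos z hz) hz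

theorem lt_iff_coe_lt_of_zero_lt (h : IsTranslationInvariantOrder A lt) {a : A}
    (ha : 0 < (a : ℚ)) (hla : lt 0 a) (x y : A) : lt x y ↔ (x : ℚ) < y := by
  rw [h.lt_iff_zero_lt_sub, h.zero_lt_iff_of_zero_lt ha hla, AddSubgroup.coe_sub, sub_pos]

end IsTranslationInvariantOrder

theorem AddSubgroup.eq_zero_of_forall_coe_nonpos {A : AddSubgroup ℚ} (hA : ∀ z : A, (z : ℚ) ≤ 0)
    (z : A) : z = 0 := by
  exact Subtype.ext (le_antisymm (hA z) (by simpa using hA (-z)))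

/-- Any translation-invariant total order on an additive subgroup `A` of `ℚ` is
determined up to sign: it agrees with the standard order or with its reverse. -/
theorem stmt_3 (A : AddSubgroup ℚ) (lt : A → A → Prop)
    (h_irrefl : ∀ a, ¬ lt a a)
    (h_trans : ∀ a b c, lt a b → lt b c → lt a c)
    (h_total : ∀ a b, a ≠ b → lt a b ∨ lt b a)
    (h_inv : ∀ x y z, lt y z → lt (x + y) (x + z)) :
    (∀ x y : A, lt x y ↔ (x : ℚ) < (y : ℚ)) ∨
    (∀ x y : A, lt x y ↔ (y : ℚ) < (x : ℚ)) := by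
  have h : IsTranslationInvariantOrder A lt := ⟨h_irrefl, h_trans, h_total, h_inv⟩
  by_cases hpos : ∃ a : A, 0 < (a : ℚ)
  · obtain ⟨a, ha⟩ := hpos
    have ha0 : (0 : A) ≠ a := fun e => ha.ne (congrArg Subtype.val e)
    rcases h_total 0 a ha0 with hla | hla
    · exact Or.inl (h.lt_iff_coe_lt_of_zero_lt ha hla)
    · exact Or.inr fun x y => h.dual.lt_iff_coe_lt_of_zero_lt ha hla y x
  · push Not at hpos
    left
    intro x y
    obtain rfl := AddSubgroup.eq_zero_of_forall_coe_nonpos hpos x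
    obtain rfl := AddSubgroup.eq_zero_of_forall_coe_nonpos hpos y
    exact iff_of_false (h_irrefl 0) (lt_irrefl _)
end

section
/- Let B be a group acting on ℝ by orientation-preserving homeomorphisms. If B is nonabelian, then some nontrivial element of B fixes a point of ℝ. -/
/-!
If no nontrivial element has a fixed point, then by the intermediate value theorem
`φ a 0 < φ b 0` forces `φ a x < φ b x` for every `x`, so pulling back the order of `ℝ` along
`g ↦ φ g 0` gives a total order on `B` invariant under multiplication on both sides.
It is Archimedean: a bounded orbit of a homeomorphism without fixed points would converge
to a fixed point. Hölder's theorem then says that an Archimedean bi-ordered group is abelian: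
either there is a least element `f > 1` and the group is generated by `f`, or there are
arbitrarily small `ε > 1`, and bracketing `a` and `b` between consecutive powers of `ε` gives
`(ab)⁻¹ba < ε²` for all of them, which rules out `ab < ba`, and symmetrically `ba < ab`.
-/

open Function Set

theorem forall_apply_lt_self_of_continuous {X : Type*} [LinearOrder X] [TopologicalSpace X]
    [OrderClosedTopology X] [PreconnectedSpace X] {f : X → X} (hf : Continuous f)
    (hfix : ∀ x, f x ≠ x) {a : X} (ha : f a < a) (x : X) : f x < x := by
  by_contra! hx
  obtain ⟨z, -, hz⟩ := isPreconnected_univ.intermediate_value₂ (mem_univ x) (mem_univ a)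
    continuous_id.continuousOn hf.continuousOn hx ha.le
  exact hfix z hz.symm

theorem exists_lt_iterate_of_continuous {X : Type*} [ConditionallyCompleteLinearOrder X]
    [TopologicalSpace X] [OrderTopology X] {f : X → X} (hf : Continuous f)
    (hlt : ∀ x, x < f x) (x y : X) : ∃ n, y < f^[n] x := by
  by_contra! hbdd
  have hmono : Monotone fun n => f^[n] x :=
    monotone_nat_of_le_succ fun n => by rw [iterate_succ_apply']; exact (hlt _).le
  have hfixed := isFixedPt_of_tendsto_iterate
    (tendsto_atTop_ciSup hmono ⟨y, forall_mem_range.2 hbdd⟩) hf.continuousAt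
  exact (hlt _).ne' hfixed

theorem OrderIso.coe_pow {α : Type*} [Preorder α] (e : α ≃o α) (n : ℕ) : ⇑(e ^ n) = (⇑e)^[n] := by
  induction n with
  | zero => rfl
  | succ n ih => rw [pow_succ', RelIso.coe_mul, ih, iterate_succ']

theorem zpow_strictMono_of_one_lt {G : Type*} [Group G] [Preorder G] [MulLeftStrictMono G] {ε : G}
    (hε : 1 < ε) : StrictMono (ε ^ · : ℤ → G) :=
  strictMono_int_of_lt_succ fun n => by
    simpa only [zpow_add_one] using lt_mul_of_one_lt_right' (ε ^ n) hε

section Holder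

variable {G : Type*} [Group G] [LinearOrder G] [MulLeftMono G] [MulRightMono G]

theorem exists_zpow_le_lt (harch : ∀ a b : G, 1 < a → ∃ n : ℕ, b < a ^ n) {ε : G} (hε : 1 < ε)
    (g : G) : ∃ m : ℤ, ε ^ m ≤ g ∧ g < ε ^ (m + 1) := by
  have hbdd : ∃ k : ℤ, ∀ z : ℤ, g < ε ^ z → k ≤ z := by
    obtain ⟨k, hk⟩ := harch ε g⁻¹ hε
    refine ⟨-k, fun z hz => (zpow_strictMono_of_one_lt hε).le_iff_le.1 ?_⟩
    have : ε ^ (-k : ℤ) < g := by rw [zpow_neg, zpow_natCast]; exact inv_lt'.1 hk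
    exact (this.trans hz).le
  obtain ⟨k, hk⟩ := harch ε g hε
  obtain ⟨m, hm, hmin⟩ := Int.exists_least_of_bdd hbdd ⟨k, by rwa [zpow_natCast]⟩
  refine ⟨m - 1, not_lt.1 fun h => ?_, by rwa [sub_add_cancel]⟩
  exact absurd (hmin _ h) (by omega)

theorem exists_eq_zpow_of_forall_le (harch : ∀ a b : G, 1 < a → ∃ n : ℕ, b < a ^ n) {f : G}
    (hf : 1 < f) (hmin : ∀ g, 1 < g → f ≤ g) (g : G) : ∃ m : ℤ, g = f ^ m := by
  obtain ⟨m, hm, hm'⟩ := exists_zpow_le_lt harch hf g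
  have h1 : 1 ≤ (f ^ m)⁻¹ * g := le_inv_mul_iff_mul_le.2 (by simpa)
  have h2 : (f ^ m)⁻¹ * g < f := inv_mul_lt_iff_lt_mul.2 (by rwa [← zpow_add_one])
  have : (f ^ m)⁻¹ * g = 1 := h1.eq_or_lt.elim Eq.symm fun h => absurd (hmin _ h) (not_le.2 h2)
  exact ⟨m, (inv_mul_eq_one.1 this).symm⟩

theorem exists_mul_self_le (hdense : ∀ c : G, 1 < c → ∃ a, 1 < a ∧ a < c) {c : G} (hc : 1 < c) :
    ∃ ε, 1 < ε ∧ ε * ε ≤ c := by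
  obtain ⟨a, ha, hac⟩ := hdense c hc
  by_cases haa : a * a ≤ c
  · exact ⟨a, ha, haa⟩
  have hca : c * a⁻¹ ≤ a := mul_inv_le_iff_le_mul.2 (not_le.1 haa).le
  refine ⟨a⁻¹ * c, lt_inv_mul_iff_mul_lt.2 (by simpa using hac), ?_⟩
  calc a⁻¹ * c * (a⁻¹ * c) = a⁻¹ * (c * a⁻¹) * c := by group
    _ ≤ a⁻¹ * a * c := mul_le_mul_left (mul_le_mul_right hca a⁻¹) c
    _ = c := by group

theorem mul_comm_of_archimedean (harch : ∀ a b : G, 1 < a → ∃ n : ℕ, b < a ^ n) (a b : G) :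
    a * b = b * a := by
  by_cases hdense : ∀ c : G, 1 < c → ∃ a, 1 < a ∧ a < c
  · wlog hlt : a * b < b * a generalizing a b
    · rcases (not_lt.1 hlt).lt_or_eq with h | h
      · exact (this b a h).symm
      · exact h.symm
    obtain ⟨ε, hε, hεc⟩ := exists_mul_self_le hdense (lt_inv_mul_iff_mul_lt.2 (by simpa using hlt))
    obtain ⟨m, ham, ham'⟩ := exists_zpow_le_lt harch hε a
    obtain ⟨n, hbn, hbn'⟩ := exists_zpow_le_lt harch hε b
    have := calc b * a < ε ^ (n + 1) * ε ^ (m + 1) := mul_lt_mul_of_lt_of_le hbn' ham'.le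
      _ = ε ^ m * ε ^ n * (ε * ε) := by group
      _ ≤ a * b * ((a * b)⁻¹ * (b * a)) := mul_le_mul' (mul_le_mul' ham hbn) hεc
      _ = b * a := by group
    exact absurd this (lt_irrefl _)
  · push Not at hdense
    obtain ⟨f, hf, hmin⟩ := hdense
    obtain ⟨m, rfl⟩ := exists_eq_zpow_of_forall_le harch hf hmin a
    obtain ⟨n, rfl⟩ := exists_eq_zpow_of_forall_le harch hf hmin b
    exact (Commute.zpow_zpow_self f m n).eq

end Holder

theorem apply_injective_of_free {α B : Type*} [Preorder α] [Group B] {φ : B →* (α ≃o α)}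
    (hfree : ∀ g, g ≠ 1 → ∀ x, φ g x ≠ x) (x : α) :
    Injective fun g => φ g x := by
  intro a b (hab : φ a x = φ b x)
  by_contra hne
  exact hfree (b⁻¹ * a) (fun h => hne (inv_mul_eq_one.1 h).symm) x (by simp [RelIso.mul_apply, hab])

section FreeAction

variable {α : Type*} [ConditionallyCompleteLinearOrder α] [DenselyOrdered α] [TopologicalSpace α]
  [OrderTopology α] {B : Type*} [Group B] {φ : B →* (α ≃o α)}

theorem apply_lt_apply_of_free (hfree : ∀ g, g ≠ 1 → ∀ x, φ g x ≠ x) {a b : B} {x : α}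
    (h : φ a x < φ b x) (y : α) : φ a y < φ b y := by
  have hne : b⁻¹ * a ≠ 1 := fun hab => h.ne (by rw [inv_mul_eq_one.1 hab])
  have hx : φ (b⁻¹ * a) x < x := by
    simpa [RelIso.mul_apply] using (φ b)⁻¹.strictMono h
  have := forall_apply_lt_self_of_continuous (φ (b⁻¹ * a)).continuous (hfree _ hne) hx y
  simpa using (φ b).strictMono this

theorem exists_apply_lt_apply_pow (hfree : ∀ g, g ≠ 1 → ∀ x, φ g x ≠ x) {f : B} {x : α}
    (hf : x < φ f x) (g : B) : ∃ n : ℕ, φ g x < φ (f ^ n) x := by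
  have hlt (y : α) : y < φ f y := by
    simpa using apply_lt_apply_of_free hfree (a := 1) (by simpa using hf) y
  simpa [OrderIso.coe_pow] using
    exists_lt_iterate_of_continuous (φ f).continuous hlt x (φ g x)

end FreeAction

/-- If a nonabelian group acts on `ℝ` by orientation-preserving homeomorphisms
(modeled as order isomorphisms `ℝ ≃o ℝ`), then some nontrivial element fixes a
point of `ℝ`. -/
theorem stmt_6 (B : Type*) [Group B] (φ : B →* (ℝ ≃o ℝ))
    (h_nonabelian : ∃ g h : B, g * h ≠ h * g) :
    ∃ g : B, g ≠ 1 ∧ ∃ x : ℝ, φ g x = x := by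
  by_contra! hfree
  obtain ⟨a, b, hab⟩ := h_nonabelian
  let : LinearOrder B := LinearOrder.lift' (fun g => φ g 0) (apply_injective_of_free hfree 0)
  have : MulLeftStrictMono B := ⟨fun c a b (h : φ a 0 < φ b 0) =>
    show φ (c * a) 0 < φ (c * b) 0 by simpa using (φ c).strictMono h⟩
  have : MulRightStrictMono B := ⟨fun c a b (h : φ a 0 < φ b 0) =>
    show φ (a * c) 0 < φ (b * c) 0 by simpa using apply_lt_apply_of_free hfree h (φ c 0)⟩
  have := mulLeftMono_of_mulLeftStrictMono B
  have := mulRightMono_of_mulRightStrictMono B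
  refine hab (mul_comm_of_archimedean (fun f g (hf : φ 1 0 < φ f 0) => ?_) a b)
  exact exists_apply_lt_apply_pow hfree (by simpa using hf) g
end
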